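/- Comparison of moduli of continuity: for T affine on convex Π, with δ_{χ²}(t), δ_{H²}(t), δ_TV(t) the moduli of continuity of T with respect to χ², H², and TV respectively, one has for all t ≥ 0: (1/2)·δ_{H²}(t) ≤ δ_{χ²}(t) ≤ δ_{H²}(t) ≤ δ_TV(t) ≤ δ_{H²}(√(2t)). -/

import Mathlib

open MeasureTheory Classical
open scoped NNReal ENNReal

/-- Total variation distance: `TV(P,Q) = sup_E |P(E) - Q(E)|` over measurable events. -/
noncomputable def TVdist {Ω : Type*} [MeasurableSpace Ω] (P Q : Measure Ω) : ℝ :=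
  ⨆ s : {s : Set Ω // MeasurableSet s}, |(P s).toReal - (Q s).toReal|

/-- Squared Hellinger distance, computed with the dominating measure `ν = P + Q`. -/
noncomputable def sqHellinger {Ω : Type*} [MeasurableSpace Ω] (P Q : Measure Ω) : ℝ :=
  ∫ x, (Real.sqrt ((P.rnDeriv (P + Q)) x).toReal
        - Real.sqrt ((Q.rnDeriv (P + Q)) x).toReal) ^ 2 ∂(P + Q)

/-- χ²-divergence: `∫ (dP/dQ)² dQ - 1` if `P ≪ Q`, and `∞` otherwise. -/
noncomputable def chiSq {Ω : Type*} [MeasurableSpace Ω] (P Q : Measure Ω) : ℝ≥0∞ :=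
  if P ≪ Q then (∫⁻ x, (P.rnDeriv Q x) ^ 2 ∂Q) - 1 else ⊤

section AuxModuli

variable {Ω : Type*} [MeasurableSpace Ω]

lemma tv_bddAbove (Q' Q : Measure Ω) [IsFiniteMeasure Q'] [IsFiniteMeasure Q] :
    BddAbove (Set.range fun s : {s : Set Ω // MeasurableSet s} =>
      |(Q' s).toReal - (Q s).toReal|) := by
  refine ⟨(Q' Set.univ).toReal + (Q Set.univ).toReal, ?_⟩
  rintro x ⟨s, rfl⟩
  have h1 : (Q' s).toReal ≤ (Q' Set.univ).toReal :=
    ENNReal.toReal_mono (measure_ne_top _ _) (measure_mono (Set.subset_univ _))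
  have h2 : (Q s).toReal ≤ (Q Set.univ).toReal :=
    ENNReal.toReal_mono (measure_ne_top _ _) (measure_mono (Set.subset_univ _))
  have h3 : (0:ℝ) ≤ (Q' s).toReal := ENNReal.toReal_nonneg
  have h4 : (0:ℝ) ≤ (Q s).toReal := ENNReal.toReal_nonneg
  rw [abs_sub_le_iff]; constructor <;> linarith

lemma le_TVdist {Q' Q : Measure Ω} [IsFiniteMeasure Q'] [IsFiniteMeasure Q]
    {s : Set Ω} (hs : MeasurableSet s) :
    |(Q' s).toReal - (Q s).toReal| ≤ TVdist Q' Q :=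
  le_ciSup (tv_bddAbove Q' Q) (⟨s, hs⟩ : {s : Set Ω // MeasurableSet s})

lemma TVdist_le {Q' Q : Measure Ω} {c : ℝ}
    (h : ∀ s : Set Ω, MeasurableSet s → |(Q' s).toReal - (Q s).toReal| ≤ c) :
    TVdist Q' Q ≤ c :=
  ciSup_le fun s => h s s.2

lemma TVdist_nonneg {Q' Q : Measure Ω} [IsFiniteMeasure Q'] [IsFiniteMeasure Q] :
    0 ≤ TVdist Q' Q :=
  (abs_nonneg _).trans (le_TVdist MeasurableSet.empty)

lemma TVdist_self (Q : Measure Ω) [IsFiniteMeasure Q] : TVdist Q Q = 0 :=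
  le_antisymm (TVdist_le fun s _ => by simp) TVdist_nonneg

lemma sqHellinger_nonneg (Q' Q : Measure Ω) : 0 ≤ sqHellinger Q' Q :=
  integral_nonneg fun x => sq_nonneg _

lemma sqHellinger_self (Q : Measure Ω) : sqHellinger Q Q = 0 := by
  simp [sqHellinger]

lemma chiSq_self (Q : Measure Ω) [IsProbabilityMeasure Q] : chiSq Q Q = 0 := by
  rw [chiSq, if_pos Measure.AbsolutelyContinuous.rfl]
  have h : ∫⁻ x, (Q.rnDeriv Q x) ^ 2 ∂Q = 1 := by
    have := Measure.rnDeriv_self Q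
    rw [lintegral_congr_ae (this.mono fun x hx => by rw [hx])]
    simp
  rw [h]; simp

lemma ae_add_one (Q' Q : Measure Ω) [IsFiniteMeasure Q'] [IsFiniteMeasure Q] :
    ∀ᵐ x ∂(Q' + Q), Q'.rnDeriv (Q' + Q) x + Q.rnDeriv (Q' + Q) x = 1 := by
  filter_upwards [Measure.rnDeriv_add Q' Q (Q' + Q), Measure.rnDeriv_self (Q' + Q)]
    with x h1 h2
  rw [← h2, h1]; rfl

lemma ae_props (Q' Q : Measure Ω) [IsFiniteMeasure Q'] [IsFiniteMeasure Q] :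
    ∀ᵐ x ∂(Q' + Q),
      (Q'.rnDeriv (Q' + Q) x).toReal + (Q.rnDeriv (Q' + Q) x).toReal = 1
      ∧ Q'.rnDeriv (Q' + Q) x ≤ 1 ∧ Q.rnDeriv (Q' + Q) x ≤ 1 := by
  filter_upwards [ae_add_one Q' Q] with x hx
  have hq : Q'.rnDeriv (Q' + Q) x ≤ 1 := hx ▸ le_add_right le_rfl
  have hp : Q.rnDeriv (Q' + Q) x ≤ 1 := hx ▸ le_add_left le_rfl
  refine ⟨?_, hq, hp⟩
  rw [← ENNReal.toReal_add (ne_top_of_le_ne_top ENNReal.one_ne_top hq)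
    (ne_top_of_le_ne_top ENNReal.one_ne_top hp), hx, ENNReal.toReal_one]

lemma isProb_mix (μ μ' : Measure Ω) [IsProbabilityMeasure μ] [IsProbabilityMeasure μ']
    (a b : ℝ≥0) (hab : a + b = 1) :
    IsProbabilityMeasure ((a : ℝ≥0∞) • μ + (b : ℝ≥0∞) • μ') := by
  constructor
  simp only [Measure.add_apply, Measure.smul_apply, smul_eq_mul, measure_univ, mul_one]
  rw [← ENNReal.coe_add, hab, ENNReal.coe_one]

lemma real_sq_sqrt_sub_le {a b : ℝ} (ha : 0 ≤ a) (hb : 0 ≤ b) :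
    (Real.sqrt a - Real.sqrt b) ^ 2 ≤ |a - b| := by
  have h1 : Real.sqrt a ^ 2 = a := Real.sq_sqrt ha
  have h2 : Real.sqrt b ^ 2 = b := Real.sq_sqrt hb
  have h3 := Real.sqrt_nonneg a
  have h4 := Real.sqrt_nonneg b
  rcases abs_cases (a - b) with ⟨h, _⟩ | ⟨h, _⟩ <;> rw [h] <;>
    nlinarith [sq_nonneg (Real.sqrt a - Real.sqrt b), sq_nonneg (Real.sqrt a + Real.sqrt b),
      mul_nonneg h3 h4]

lemma real_chi_mid_ptwise {f g : ℝ} (hf : 0 ≤ f) (hg : 0 ≤ g) (hfg : f + g = 1) :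
    2 * g ^ 2 - 2 * g + 1 / 2 ≤ (Real.sqrt g - Real.sqrt f) ^ 2 := by
  have h1 : Real.sqrt f ^ 2 = f := Real.sq_sqrt hf
  have h2 : Real.sqrt g ^ 2 = g := Real.sq_sqrt hg
  have h3 := Real.sqrt_nonneg f
  have h4 := Real.sqrt_nonneg g
  nlinarith [sq_nonneg (2 * (Real.sqrt f * Real.sqrt g) - 1),
    sq_nonneg (Real.sqrt f * Real.sqrt g), mul_nonneg h3 h4]

lemma real_hellinger_chi_ptwise {d f : ℝ} (hd : 0 ≤ d) (hf : 0 ≤ f) :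
    (Real.sqrt (d * f) - Real.sqrt f) ^ 2 ≤ (d - 1) ^ 2 * f := by
  rw [Real.sqrt_mul hd]
  have h1 : Real.sqrt d ^ 2 = d := Real.sq_sqrt hd
  have h2 : Real.sqrt f ^ 2 = f := Real.sq_sqrt hf
  have h3 := Real.sqrt_nonneg d
  have h4 := Real.sqrt_nonneg f
  have h5 : (Real.sqrt d - 1) * (Real.sqrt d + 1) = d - 1 := by
    have : (Real.sqrt d - 1) * (Real.sqrt d + 1) = Real.sqrt d ^ 2 - 1 := by ring
    rw [this, h1]
  rw [← h5]
  have h6 : (0:ℝ) ≤ (Real.sqrt d + 1) ^ 2 - 1 := by nlinarith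
  nlinarith [mul_nonneg (mul_nonneg hf (sq_nonneg (Real.sqrt d - 1))) h6]

lemma real_abs_le_am {a b c : ℝ} (ha : 0 ≤ a) (hb : 0 ≤ b) (hab : a + b = 1) (hc : 0 < c) :
    |a - b| ≤ Real.sqrt 2 * ((Real.sqrt a - Real.sqrt b) ^ 2 / (2 * c) + c / 2) := by
  have h3 : Real.sqrt a ^ 2 = a := Real.sq_sqrt ha
  have h4 : Real.sqrt b ^ 2 = b := Real.sq_sqrt hb
  have h5 := Real.sqrt_nonneg a
  have h6 := Real.sqrt_nonneg b
  have hsum2 : (Real.sqrt a + Real.sqrt b) ^ 2 ≤ 2 := by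
    nlinarith [sq_nonneg (Real.sqrt a - Real.sqrt b)]
  have hsum : Real.sqrt a + Real.sqrt b ≤ Real.sqrt 2 := by
    calc Real.sqrt a + Real.sqrt b = Real.sqrt ((Real.sqrt a + Real.sqrt b) ^ 2) :=
          (Real.sqrt_sq (by positivity)).symm
      _ ≤ Real.sqrt 2 := Real.sqrt_le_sqrt hsum2
  have habs : |a - b| = |Real.sqrt a - Real.sqrt b| * (Real.sqrt a + Real.sqrt b) := by
    have h7 : (Real.sqrt a - Real.sqrt b) * (Real.sqrt a + Real.sqrt b) = a - b := by
      have : (Real.sqrt a - Real.sqrt b) * (Real.sqrt a + Real.sqrt b)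
          = Real.sqrt a ^ 2 - Real.sqrt b ^ 2 := by ring
      rw [this, h3, h4]
    rw [← h7, abs_mul, abs_of_nonneg (by positivity : (0:ℝ) ≤ Real.sqrt a + Real.sqrt b)]
  have ham : |Real.sqrt a - Real.sqrt b| ≤ (Real.sqrt a - Real.sqrt b) ^ 2 / (2 * c) + c / 2 := by
    have key : 2 * c * ((Real.sqrt a - Real.sqrt b) ^ 2 / (2 * c) + c / 2)
        = (Real.sqrt a - Real.sqrt b) ^ 2 + c ^ 2 := by field_simp
    nlinarith [sq_nonneg (|Real.sqrt a - Real.sqrt b| - c), sq_abs (Real.sqrt a - Real.sqrt b),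
      abs_nonneg (Real.sqrt a - Real.sqrt b)]
  calc |a - b| = |Real.sqrt a - Real.sqrt b| * (Real.sqrt a + Real.sqrt b) := habs
    _ ≤ ((Real.sqrt a - Real.sqrt b) ^ 2 / (2 * c) + c / 2) * Real.sqrt 2 := by
        apply mul_le_mul ham hsum (by positivity) (by positivity)
    _ = Real.sqrt 2 * ((Real.sqrt a - Real.sqrt b) ^ 2 / (2 * c) + c / 2) := mul_comm _ _

lemma tv_smul (Q' Q : Measure Ω) [IsFiniteMeasure Q'] [IsFiniteMeasure Q]
    (lam : ℝ≥0) (hlam : lam ≤ 1) :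
    TVdist ((lam : ℝ≥0∞) • Q' + (((1 : ℝ≥0) - lam : ℝ≥0) : ℝ≥0∞) • Q) Q
      ≤ (lam : ℝ) * TVdist Q' Q := by
  apply TVdist_le
  intro s hs
  have hQ's := measure_ne_top Q' s
  have hQs := measure_ne_top Q s
  have key : ((((lam : ℝ≥0∞) • Q' + (((1 : ℝ≥0) - lam : ℝ≥0) : ℝ≥0∞) • Q)) s).toReal
      = (lam : ℝ) * (Q' s).toReal + ((1:ℝ) - (lam:ℝ)) * (Q s).toReal := by
    simp only [Measure.add_apply, Measure.smul_apply, smul_eq_mul]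
    rw [ENNReal.toReal_add (by finiteness) (by finiteness),
      ENNReal.toReal_mul, ENNReal.toReal_mul, ENNReal.coe_toReal, ENNReal.coe_toReal,
      NNReal.coe_sub hlam, NNReal.coe_one]
  rw [key]
  have : (lam : ℝ) * (Q' s).toReal + ((1:ℝ) - (lam:ℝ)) * (Q s).toReal - (Q s).toReal
      = (lam : ℝ) * ((Q' s).toReal - (Q s).toReal) := by ring
  rw [this, abs_mul, abs_of_nonneg (lam.coe_nonneg)]
  exact mul_le_mul_of_nonneg_left (le_TVdist hs) lam.coe_nonneg

lemma sqH_le_two_tv (Q' Q : Measure Ω) [IsFiniteMeasure Q'] [IsFiniteMeasure Q] :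
    sqHellinger Q' Q ≤ 2 * TVdist Q' Q := by
  set ν := Q' + Q with hν
  set g := fun x => (Q'.rnDeriv ν x).toReal with hgdef
  set f := fun x => (Q.rnDeriv ν x).toReal with hfdef
  have hQ'ν : Q' ≪ ν := Measure.absolutelyContinuous_of_le (Measure.le_add_right le_rfl)
  have hQν : Q ≪ ν := Measure.absolutelyContinuous_of_le (Measure.le_add_left le_rfl)
  have hgm : Measurable g := (Measure.measurable_rnDeriv _ _).ennreal_toReal
  have hfm : Measurable f := (Measure.measurable_rnDeriv _ _).ennreal_toReal
  have hg_int : Integrable g ν := Measure.integrable_toReal_rnDeriv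
  have hf_int : Integrable f ν := Measure.integrable_toReal_rnDeriv
  have habs_int : Integrable (fun x => |g x - f x|) ν := (hg_int.sub hf_int).abs
  have hsqm : Measurable (fun x => (Real.sqrt (g x) - Real.sqrt (f x)) ^ 2) :=
    ((Real.continuous_sqrt.measurable.comp hgm).sub
      (Real.continuous_sqrt.measurable.comp hfm)).pow_const 2
  have hsq_int : Integrable (fun x => (Real.sqrt (g x) - Real.sqrt (f x)) ^ 2) ν := by
    refine (hg_int.add hf_int).mono' hsqm.aestronglyMeasurable ?_
    refine Filter.Eventually.of_forall fun x => ?_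
    have h1 : (0:ℝ) ≤ g x := ENNReal.toReal_nonneg
    have h2 : (0:ℝ) ≤ f x := ENNReal.toReal_nonneg
    have h3 : Real.sqrt (g x) ^ 2 = g x := Real.sq_sqrt h1
    have h4 : Real.sqrt (f x) ^ 2 = f x := Real.sq_sqrt h2
    rw [Real.norm_eq_abs, abs_of_nonneg (sq_nonneg _)]
    simp only [Pi.add_apply]
    nlinarith [mul_nonneg (Real.sqrt_nonneg (g x)) (Real.sqrt_nonneg (f x))]
  have step1 : sqHellinger Q' Q ≤ ∫ x, |g x - f x| ∂ν := by
    have hH : sqHellinger Q' Q = ∫ x, (Real.sqrt (g x) - Real.sqrt (f x)) ^ 2 ∂ν := rfl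
    rw [hH]
    exact integral_mono hsq_int habs_int fun x =>
      real_sq_sqrt_sub_le ENNReal.toReal_nonneg ENNReal.toReal_nonneg
  have hs : MeasurableSet {x | f x ≤ g x} := measurableSet_le hfm hgm
  have e1 : ∫ x in {x | f x ≤ g x}, |g x - f x| ∂ν
      = (Q' {x | f x ≤ g x}).toReal - (Q {x | f x ≤ g x}).toReal := by
    rw [setIntegral_congr_fun hs (g := fun x => g x - f x)
      (fun x hx => abs_of_nonneg (sub_nonneg.2 hx)),
      integral_sub hg_int.integrableOn hf_int.integrableOn,
      Measure.setIntegral_toReal_rnDeriv hQ'ν _, Measure.setIntegral_toReal_rnDeriv hQν _]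
    rfl
  have e2 : ∫ x in {x | f x ≤ g x}ᶜ, |g x - f x| ∂ν
      = (Q {x | f x ≤ g x}ᶜ).toReal - (Q' {x | f x ≤ g x}ᶜ).toReal := by
    rw [setIntegral_congr_fun hs.compl (g := fun x => f x - g x)
      (fun x hx => by
        rw [abs_sub_comm]
        exact abs_of_nonneg (sub_nonneg.2 (le_of_lt (not_le.mp hx)))),
      integral_sub hf_int.integrableOn hg_int.integrableOn,
      Measure.setIntegral_toReal_rnDeriv hQ'ν _, Measure.setIntegral_toReal_rnDeriv hQν _]
    rfl
  have hsplit : ∫ x, |g x - f x| ∂ν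
      = (∫ x in {x | f x ≤ g x}, |g x - f x| ∂ν)
        + ∫ x in {x | f x ≤ g x}ᶜ, |g x - f x| ∂ν := (integral_add_compl hs habs_int).symm
  have b1 : (Q' {x | f x ≤ g x}).toReal - (Q {x | f x ≤ g x}).toReal ≤ TVdist Q' Q :=
    (le_abs_self _).trans (le_TVdist hs)
  have b2 : (Q {x | f x ≤ g x}ᶜ).toReal - (Q' {x | f x ≤ g x}ᶜ).toReal ≤ TVdist Q' Q := by
    refine (le_abs_self _).trans ?_
    rw [abs_sub_comm]
    exact le_TVdist hs.compl
  linarith [step1, hsplit, e1, e2, b1, b2]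

lemma tv_le_sqrt_sqH (Q' Q : Measure Ω) [IsProbabilityMeasure Q'] [IsProbabilityMeasure Q] :
    TVdist Q' Q ≤ Real.sqrt (sqHellinger Q' Q) := by
  set ν := Q' + Q with hν
  set g := fun x => (Q'.rnDeriv ν x).toReal with hgdef
  set f := fun x => (Q.rnDeriv ν x).toReal with hfdef
  have hQ'ν : Q' ≪ ν := Measure.absolutelyContinuous_of_le (Measure.le_add_right le_rfl)
  have hQν : Q ≪ ν := Measure.absolutelyContinuous_of_le (Measure.le_add_left le_rfl)
  have hgm : Measurable g := (Measure.measurable_rnDeriv _ _).ennreal_toReal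
  have hfm : Measurable f := (Measure.measurable_rnDeriv _ _).ennreal_toReal
  have hg_int : Integrable g ν := Measure.integrable_toReal_rnDeriv
  have hf_int : Integrable f ν := Measure.integrable_toReal_rnDeriv
  have habs_int : Integrable (fun x => |g x - f x|) ν := (hg_int.sub hf_int).abs
  have hsqm : Measurable (fun x => (Real.sqrt (g x) - Real.sqrt (f x)) ^ 2) :=
    ((Real.continuous_sqrt.measurable.comp hgm).sub
      (Real.continuous_sqrt.measurable.comp hfm)).pow_const 2
  have hsq_int : Integrable (fun x => (Real.sqrt (g x) - Real.sqrt (f x)) ^ 2) ν := by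
    refine (hg_int.add hf_int).mono' hsqm.aestronglyMeasurable ?_
    refine Filter.Eventually.of_forall fun x => ?_
    have h1 : (0:ℝ) ≤ g x := ENNReal.toReal_nonneg
    have h2 : (0:ℝ) ≤ f x := ENNReal.toReal_nonneg
    have h3 : Real.sqrt (g x) ^ 2 = g x := Real.sq_sqrt h1
    have h4 : Real.sqrt (f x) ^ 2 = f x := Real.sq_sqrt h2
    rw [Real.norm_eq_abs, abs_of_nonneg (sq_nonneg _)]
    simp only [Pi.add_apply]
    nlinarith [mul_nonneg (Real.sqrt_nonneg (g x)) (Real.sqrt_nonneg (f x))]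
  set S := sqHellinger Q' Q with hSdef
  have hS : S = ∫ x, (Real.sqrt (g x) - Real.sqrt (f x)) ^ 2 ∂ν := rfl
  have hS0 : 0 ≤ S := hS ▸ integral_nonneg fun x => sq_nonneg _
  have hνuniv : (ν Set.univ).toReal = 2 := by
    rw [hν, Measure.add_apply, measure_univ]; norm_num
  -- step: for every c > 0
  have step : ∀ c : ℝ, 0 < c → (∫ x, |g x - f x| ∂ν) ≤ Real.sqrt 2 * (S / (2 * c) + c) := by
    intro c hc
    have hmono : (∫ x, |g x - f x| ∂ν) ≤ ∫ x,
        (Real.sqrt 2 / (2 * c)) * (Real.sqrt (g x) - Real.sqrt (f x)) ^ 2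
          + Real.sqrt 2 * c / 2 ∂ν := by
      refine integral_mono_ae habs_int ?_ ?_
      · exact ((hsq_int.const_mul _).add (integrable_const _))
      · filter_upwards [ae_props Q' Q] with x hx
        have := real_abs_le_am (b := f x) ENNReal.toReal_nonneg ENNReal.toReal_nonneg hx.1 hc
        calc |g x - f x| ≤ Real.sqrt 2 * ((Real.sqrt (g x) - Real.sqrt (f x)) ^ 2 / (2 * c) + c / 2) := this
          _ = (Real.sqrt 2 / (2 * c)) * (Real.sqrt (g x) - Real.sqrt (f x)) ^ 2
              + Real.sqrt 2 * c / 2 := by ring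
    have hcomp : ∫ x, (Real.sqrt 2 / (2 * c)) * (Real.sqrt (g x) - Real.sqrt (f x)) ^ 2
        + Real.sqrt 2 * c / 2 ∂ν = Real.sqrt 2 * (S / (2 * c) + c) := by
      rw [integral_add (hsq_int.const_mul _) (integrable_const _), integral_const_mul,
        integral_const, smul_eq_mul, measureReal_def, hνuniv, ← hS]
      ring
    linarith [hmono, hcomp ▸ hmono]
  -- step2 : ∫|g-f| ≤ 2 √S
  have step2 : (∫ x, |g x - f x| ∂ν) ≤ 2 * Real.sqrt S := by
    by_contra hcon
    push_neg at hcon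
    set ε := (∫ x, |g x - f x| ∂ν) - 2 * Real.sqrt S with hε
    have hε0 : 0 < ε := by linarith
    have hc0 : 0 < Real.sqrt (S / 2) + ε / 4 := by positivity
    have hb := step _ hc0
    have hq : Real.sqrt (S / 2) ^ 2 = S / 2 := Real.sq_sqrt (by positivity)
    have hdiv : S / (2 * (Real.sqrt (S / 2) + ε / 4)) ≤ Real.sqrt (S / 2) := by
      rw [div_le_iff₀ (by positivity)]
      nlinarith [Real.sqrt_nonneg (S / 2)]
    have hsq2 : Real.sqrt 2 * Real.sqrt (S / 2) = Real.sqrt S := by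
      have h28 : (2:ℝ) * (S / 2) = S := by ring
      calc Real.sqrt 2 * Real.sqrt (S / 2) = Real.sqrt (2 * (S / 2)) :=
            (Real.sqrt_mul (by norm_num) _).symm
        _ = Real.sqrt S := by rw [h28]
    have hsqrt2le : Real.sqrt 2 ≤ 2 := by
      nlinarith [Real.sq_sqrt (by norm_num : (0:ℝ) ≤ 2), Real.sqrt_nonneg 2]
    have hsqrt2pos : 0 < Real.sqrt 2 := by positivity
    have : Real.sqrt 2 * (S / (2 * (Real.sqrt (S / 2) + ε / 4)) + (Real.sqrt (S / 2) + ε / 4))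
        ≤ 2 * Real.sqrt S + ε / 2 := by
      have h1 : Real.sqrt 2 * (S / (2 * (Real.sqrt (S / 2) + ε / 4)))
          ≤ Real.sqrt 2 * Real.sqrt (S / 2) :=
        mul_le_mul_of_nonneg_left hdiv (le_of_lt hsqrt2pos)
      have h2 : Real.sqrt 2 * (ε / 4) ≤ ε / 2 := by nlinarith
      calc Real.sqrt 2 * (S / (2 * (Real.sqrt (S / 2) + ε / 4)) + (Real.sqrt (S / 2) + ε / 4))
          = Real.sqrt 2 * (S / (2 * (Real.sqrt (S / 2) + ε / 4)))
            + Real.sqrt 2 * Real.sqrt (S / 2) + Real.sqrt 2 * (ε / 4) := by ring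
        _ ≤ Real.sqrt S + Real.sqrt S + ε / 2 := by rw [hsq2] at h1 ⊢; linarith
        _ = 2 * Real.sqrt S + ε / 2 := by ring
    have : (∫ x, |g x - f x| ∂ν) ≤ 2 * Real.sqrt S + ε / 2 := le_trans hb this
    linarith
  -- per-set bound
  apply TVdist_le
  intro s hs
  have hset' : ∫ x in s, (g x - f x) ∂ν = (Q' s).toReal - (Q s).toReal := by
    rw [integral_sub hg_int.integrableOn hf_int.integrableOn,
      Measure.setIntegral_toReal_rnDeriv hQ'ν _, Measure.setIntegral_toReal_rnDeriv hQν _]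
    rfl
  have hsetc : ∫ x in sᶜ, (g x - f x) ∂ν = (Q' sᶜ).toReal - (Q sᶜ).toReal := by
    rw [integral_sub hg_int.integrableOn hf_int.integrableOn,
      Measure.setIntegral_toReal_rnDeriv hQ'ν _, Measure.setIntegral_toReal_rnDeriv hQν _]
    rfl
  have htot : ∫ x, (g x - f x) ∂ν = 0 := by
    rw [integral_sub hg_int hf_int, Measure.integral_toReal_rnDeriv hQ'ν,
      Measure.integral_toReal_rnDeriv hQν]
    simp [measure_univ]
  have hsum : (∫ x in s, (g x - f x) ∂ν) + ∫ x in sᶜ, (g x - f x) ∂ν = 0 := by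
    rw [integral_add_compl (f := fun x => g x - f x) hs (hg_int.sub hf_int), htot]
  have hb1 : |∫ x in s, (g x - f x) ∂ν| ≤ ∫ x in s, |g x - f x| ∂ν := by
    simpa [Real.norm_eq_abs] using
      norm_integral_le_integral_norm (μ := ν.restrict s) (f := fun x => g x - f x)
  have hb2 : |∫ x in sᶜ, (g x - f x) ∂ν| ≤ ∫ x in sᶜ, |g x - f x| ∂ν := by
    simpa [Real.norm_eq_abs] using
      norm_integral_le_integral_norm (μ := ν.restrict sᶜ) (f := fun x => g x - f x)
  have habs_split : (∫ x in s, |g x - f x| ∂ν) + ∫ x in sᶜ, |g x - f x| ∂ν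
      = ∫ x, |g x - f x| ∂ν := integral_add_compl hs habs_int
  have heq : |(Q' s).toReal - (Q s).toReal| = |∫ x in s, (g x - f x) ∂ν| := by rw [hset']
  have hopp : |∫ x in sᶜ, (g x - f x) ∂ν| = |∫ x in s, (g x - f x) ∂ν| := by
    have : ∫ x in sᶜ, (g x - f x) ∂ν = -(∫ x in s, (g x - f x) ∂ν) := by linarith
    rw [this, abs_neg]
  rw [heq]
  have : 2 * |∫ x in s, (g x - f x) ∂ν| ≤ 2 * Real.sqrt S := by
    calc 2 * |∫ x in s, (g x - f x) ∂ν|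
        = |∫ x in s, (g x - f x) ∂ν| + |∫ x in sᶜ, (g x - f x) ∂ν| := by rw [hopp]; ring
      _ ≤ (∫ x in s, |g x - f x| ∂ν) + ∫ x in sᶜ, |g x - f x| ∂ν := add_le_add hb1 hb2
      _ = ∫ x, |g x - f x| ∂ν := habs_split
      _ ≤ 2 * Real.sqrt S := step2
  linarith

lemma sqH_le_of_chiSq (Q' Q : Measure Ω) [IsProbabilityMeasure Q'] [IsProbabilityMeasure Q]
    {r : ℝ} (hr : 0 ≤ r) (h : chiSq Q' Q ≤ ENNReal.ofReal r) : sqHellinger Q' Q ≤ r := by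
  have hac : Q' ≪ Q := by
    by_contra hcon
    rw [chiSq, if_neg hcon, top_le_iff] at h
    exact ENNReal.ofReal_ne_top h
  rw [chiSq, if_pos hac] at h
  set D := Q'.rnDeriv Q with hDdef
  set I := ∫⁻ x, D x ^ 2 ∂Q with hIdef
  have hI : I ≤ ENNReal.ofReal r + 1 := tsub_le_iff_right.mp h
  have hIne : I ≠ ⊤ := ne_top_of_le_ne_top (by finiteness) hI
  set ν := Q' + Q with hν
  set q := Q'.rnDeriv ν with hqdef
  set p := Q.rnDeriv ν with hpdef
  have hQ'ν : Q' ≪ ν := Measure.absolutelyContinuous_of_le (Measure.le_add_right le_rfl)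
  have hQν : Q ≪ ν := Measure.absolutelyContinuous_of_le (Measure.le_add_left le_rfl)
  have hDm : Measurable D := Measure.measurable_rnDeriv _ _
  have hpm : Measurable p := Measure.measurable_rnDeriv _ _
  have hqm : Measurable q := Measure.measurable_rnDeriv _ _
  -- I as integral over ν
  have hIν : I = ∫⁻ x, p x * D x ^ 2 ∂ν := by
    rw [hIdef, ← Measure.withDensity_rnDeriv_eq Q ν hQν,
      lintegral_withDensity_eq_lintegral_mul ν hpm (hDm.pow_const 2)]
    rfl
  have hchain : (fun x => D x * p x) =ᵐ[ν] q := by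
    have := Measure.rnDeriv_mul_rnDeriv (μ := Q') (ν := Q) (κ := ν) hac
    filter_upwards [this] with x hx
    exact hx
  have hfin : ∀ᵐ x ∂ν, p x * D x ^ 2 < ⊤ :=
    ae_lt_top (hpm.mul (hDm.pow_const 2)) (hIν ▸ hIne)
  -- pointwise bound
  have hkey : ∀ᵐ x ∂ν,
      (Real.sqrt (q x).toReal - Real.sqrt (p x).toReal) ^ 2
        ≤ ((D x).toReal - 1) ^ 2 * (p x).toReal := by
    filter_upwards [hchain, hfin, ae_props Q' Q] with x hx hlt hprop
    by_cases hp0 : p x = 0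
    · have hq0 : q x = 0 := by rw [← hx, hp0, mul_zero]
      rw [hp0, hq0]
      simp
    · have hptop : p x ≠ ⊤ := ne_top_of_le_ne_top ENNReal.one_ne_top hprop.2.2
      have hDtop : D x ≠ ⊤ := by
        intro hD
        rw [hD] at hlt
        simp [ENNReal.top_pow, ENNReal.mul_top hp0] at hlt
      have hq : (q x).toReal = (D x).toReal * (p x).toReal := by
        rw [← hx, ENNReal.toReal_mul]
      rw [hq]
      exact real_hellinger_chi_ptwise ENNReal.toReal_nonneg ENNReal.toReal_nonneg
  -- integral computations
  have hDp2_meas : Measurable (fun x => p x * D x ^ 2) := hpm.mul (hDm.pow_const 2)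
  have hi1 : Integrable (fun x => (p x * D x ^ 2).toReal) ν :=
    integrable_toReal_of_lintegral_ne_top hDp2_meas.aemeasurable (hIν ▸ hIne)
  have hg_int : Integrable (fun x => (q x).toReal) ν := Measure.integrable_toReal_rnDeriv
  have hf_int : Integrable (fun x => (p x).toReal) ν := Measure.integrable_toReal_rnDeriv
  have hu_eq : (fun x => ((D x).toReal - 1) ^ 2 * (p x).toReal)
      =ᵐ[ν] fun x => (p x * D x ^ 2).toReal - 2 * (q x).toReal + (p x).toReal := by
    filter_upwards [hchain, hfin, ae_props Q' Q] with x hx hlt hprop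
    by_cases hp0 : p x = 0
    · have hq0 : q x = 0 := by rw [← hx, hp0, mul_zero]
      rw [hp0, hq0]
      simp
    · have hptop : p x ≠ ⊤ := ne_top_of_le_ne_top ENNReal.one_ne_top hprop.2.2
      have hDtop : D x ≠ ⊤ := by
        intro hD
        rw [hD] at hlt
        simp [ENNReal.top_pow, ENNReal.mul_top hp0] at hlt
      have hq : (q x).toReal = (D x).toReal * (p x).toReal := by
        rw [← hx, ENNReal.toReal_mul]
      have hDp2 : (p x * D x ^ 2).toReal = (p x).toReal * (D x).toReal ^ 2 := by
        rw [ENNReal.toReal_mul, ENNReal.toReal_pow]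
      rw [hq, hDp2]
      ring
  have hu_int : Integrable (fun x => ((D x).toReal - 1) ^ 2 * (p x).toReal) ν :=
    (((hi1.sub (hg_int.const_mul 2))).add hf_int).congr hu_eq.symm
  have hint_f : ∫ x, (p x).toReal ∂ν = 1 := by
    rw [Measure.integral_toReal_rnDeriv hQν]
    simp [measure_univ]
  have hint_g : ∫ x, (q x).toReal ∂ν = 1 := by
    rw [Measure.integral_toReal_rnDeriv hQ'ν]
    simp [measure_univ]
  have hint_i1 : ∫ x, (p x * D x ^ 2).toReal ∂ν = I.toReal := by
    rw [integral_toReal hDp2_meas.aemeasurable hfin, ← hIν]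
  have hq2_int : Integrable (fun x => 2 * (q x).toReal) ν := hg_int.const_mul 2
  have hi12 : Integrable (fun x => (p x * D x ^ 2).toReal - 2 * (q x).toReal) ν :=
    hi1.sub hq2_int
  have hu_val : ∫ x, ((D x).toReal - 1) ^ 2 * (p x).toReal ∂ν = I.toReal - 1 := by
    rw [integral_congr_ae hu_eq, integral_add hi12 hf_int,
      integral_sub hi1 hq2_int, integral_const_mul, hint_i1, hint_g, hint_f]
    ring
  -- conclude
  have hsq_int : Integrable
      (fun x => (Real.sqrt (q x).toReal - Real.sqrt (p x).toReal) ^ 2) ν := by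
    refine (hg_int.add hf_int).mono'
      (((Real.continuous_sqrt.measurable.comp hqm.ennreal_toReal).sub
        (Real.continuous_sqrt.measurable.comp hpm.ennreal_toReal)).pow_const 2).aestronglyMeasurable ?_
    refine Filter.Eventually.of_forall fun x => ?_
    have h1 : (0:ℝ) ≤ (q x).toReal := ENNReal.toReal_nonneg
    have h2 : (0:ℝ) ≤ (p x).toReal := ENNReal.toReal_nonneg
    have h3 : Real.sqrt (q x).toReal ^ 2 = (q x).toReal := Real.sq_sqrt h1
    have h4 : Real.sqrt (p x).toReal ^ 2 = (p x).toReal := Real.sq_sqrt h2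
    rw [Real.norm_eq_abs, abs_of_nonneg (sq_nonneg _)]
    simp only [Pi.add_apply]
    nlinarith [mul_nonneg (Real.sqrt_nonneg (q x).toReal) (Real.sqrt_nonneg (p x).toReal)]
  have hH : sqHellinger Q' Q
      = ∫ x, (Real.sqrt (q x).toReal - Real.sqrt (p x).toReal) ^ 2 ∂ν := rfl
  have hle : sqHellinger Q' Q ≤ I.toReal - 1 := by
    rw [hH, ← hu_val]
    exact integral_mono_ae hsq_int hu_int hkey
  have hItoReal : I.toReal ≤ r + 1 := by
    have := ENNReal.toReal_mono (by finiteness) hI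
    rwa [ENNReal.toReal_add ENNReal.ofReal_ne_top ENNReal.one_ne_top,
      ENNReal.toReal_ofReal hr, ENNReal.toReal_one] at this
  linarith

lemma chiSq_mid (Q' Q : Measure Ω) [IsProbabilityMeasure Q'] [IsProbabilityMeasure Q] :
    chiSq Q' (((1/2 : ℝ≥0) : ℝ≥0∞) • Q + ((1/2 : ℝ≥0) : ℝ≥0∞) • Q')
      ≤ ENNReal.ofReal (sqHellinger Q' Q) := by
  set c : ℝ≥0∞ := ((1/2 : ℝ≥0) : ℝ≥0∞) with hcdef
  have hc0 : c ≠ 0 := by simp [hcdef]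
  have hctop : c ≠ ⊤ := ENNReal.coe_ne_top
  have hcinv : c⁻¹ = 2 := by
    rw [hcdef, ← ENNReal.coe_inv (by norm_num)]
    norm_num
  set ν := Q' + Q with hν
  set q := Q'.rnDeriv ν with hqdef
  set p := Q.rnDeriv ν with hpdef
  have hQ'ν : Q' ≪ ν := Measure.absolutelyContinuous_of_le (Measure.le_add_right le_rfl)
  have hQν : Q ≪ ν := Measure.absolutelyContinuous_of_le (Measure.le_add_left le_rfl)
  have hqm : Measurable q := Measure.measurable_rnDeriv _ _
  have hpm : Measurable p := Measure.measurable_rnDeriv _ _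
  set M := c • Q + c • Q' with hMdef
  have hM : M = c • ν := by
    rw [hMdef, hν, ← smul_add, add_comm Q Q']
  have hac : Q' ≪ M := by
    rw [hM]
    exact hQ'ν.trans (Measure.absolutelyContinuous_smul hc0)
  rw [chiSq, if_pos hac]
  have hE : Q'.rnDeriv M =ᵐ[ν] fun x => 2 * q x := by
    rw [hM]
    filter_upwards [Measure.rnDeriv_smul_right_of_ne_top Q' ν hc0 hctop] with x hx
    rw [hx, Pi.smul_apply, smul_eq_mul, hcinv]
  have hEsq : (fun x => Q'.rnDeriv M x ^ 2) =ᵐ[ν] fun x => 4 * q x ^ 2 := by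
    filter_upwards [hE] with x hx
    rw [hx]; ring
  have hMν : M ≪ ν := by
    rw [hM]
    exact Measure.smul_absolutelyContinuous
  have hlhs : ∫⁻ x, Q'.rnDeriv M x ^ 2 ∂M = 2 * ∫⁻ x, q x ^ 2 ∂ν := by
    rw [lintegral_congr_ae (hMν.ae_eq hEsq), hM, lintegral_smul_measure,
      lintegral_const_mul 4 (hqm.pow_const 2), smul_eq_mul, ← mul_assoc]
    congr 1
    have hc : c = (2:ℝ≥0∞)⁻¹ := by rw [← hcinv, inv_inv]
    rw [hc, show (4:ℝ≥0∞) = 2 * 2 by norm_num, ← mul_assoc,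
      ENNReal.inv_mul_cancel (by norm_num) (by norm_num), one_mul]
  rw [hlhs]
  -- real side
  set g := fun x => (q x).toReal with hgdef
  set f := fun x => (p x).toReal with hfdef
  have hg_int : Integrable g ν := Measure.integrable_toReal_rnDeriv
  have hf_int : Integrable f ν := Measure.integrable_toReal_rnDeriv
  have hgsq_int : Integrable (fun x => g x ^ 2) ν := by
    refine hg_int.mono' ((hqm.ennreal_toReal.pow_const 2)).aestronglyMeasurable ?_
    filter_upwards [ae_props Q' Q] with x hx
    have h1 : (0:ℝ) ≤ g x := ENNReal.toReal_nonneg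
    have h2 : g x ≤ 1 := by
      rw [hgdef]
      exact ENNReal.toReal_le_of_le_ofReal one_pos.le (by simpa using hx.2.1)
    rw [Real.norm_eq_abs, abs_of_nonneg (by positivity)]
    nlinarith
  have hJ : ∫⁻ x, q x ^ 2 ∂ν = ENNReal.ofReal (∫ x, g x ^ 2 ∂ν) := by
    rw [ofReal_integral_eq_lintegral_ofReal hgsq_int
      (Filter.Eventually.of_forall fun x => by positivity)]
    refine lintegral_congr_ae ?_
    filter_upwards [ae_props Q' Q] with x hx
    have hqtop : q x ≠ ⊤ := ne_top_of_le_ne_top ENNReal.one_ne_top hx.2.1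
    show q x ^ 2 = ENNReal.ofReal ((q x).toReal ^ 2)
    rw [← ENNReal.toReal_pow, ENNReal.ofReal_toReal (ENNReal.pow_ne_top hqtop)]
  -- pointwise integral inequality
  have hsqm : Measurable (fun x => (Real.sqrt (g x) - Real.sqrt (f x)) ^ 2) :=
    ((Real.continuous_sqrt.measurable.comp hqm.ennreal_toReal).sub
      (Real.continuous_sqrt.measurable.comp hpm.ennreal_toReal)).pow_const 2
  have hsq_int : Integrable (fun x => (Real.sqrt (g x) - Real.sqrt (f x)) ^ 2) ν := by
    refine (hg_int.add hf_int).mono' hsqm.aestronglyMeasurable ?_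
    refine Filter.Eventually.of_forall fun x => ?_
    have h1 : (0:ℝ) ≤ g x := ENNReal.toReal_nonneg
    have h2 : (0:ℝ) ≤ f x := ENNReal.toReal_nonneg
    have h3 : Real.sqrt (g x) ^ 2 = g x := Real.sq_sqrt h1
    have h4 : Real.sqrt (f x) ^ 2 = f x := Real.sq_sqrt h2
    rw [Real.norm_eq_abs, abs_of_nonneg (sq_nonneg _)]
    simp only [Pi.add_apply]
    nlinarith [mul_nonneg (Real.sqrt_nonneg (g x)) (Real.sqrt_nonneg (f x))]
  have hgsq2_int : Integrable (fun x => 2 * g x ^ 2 - 2 * g x) ν :=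
    (hgsq_int.const_mul 2).sub (hg_int.const_mul 2)
  have hcomb_int : Integrable (fun x => 2 * g x ^ 2 - 2 * g x + 1 / 2) ν :=
    hgsq2_int.add (integrable_const _)
  have hH : sqHellinger Q' Q = ∫ x, (Real.sqrt (g x) - Real.sqrt (f x)) ^ 2 ∂ν := rfl
  have hH0 : 0 ≤ sqHellinger Q' Q := hH ▸ integral_nonneg fun x => sq_nonneg _
  have hmono : ∫ x, (2 * g x ^ 2 - 2 * g x + 1 / 2) ∂ν ≤ sqHellinger Q' Q := by
    rw [hH]
    refine integral_mono_ae hcomb_int hsq_int ?_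
    filter_upwards [ae_props Q' Q] with x hx
    exact real_chi_mid_ptwise ENNReal.toReal_nonneg ENNReal.toReal_nonneg
      (by rw [add_comm]; exact hx.1)
  have hint_g : ∫ x, g x ∂ν = 1 := by
    rw [hgdef, hqdef, Measure.integral_toReal_rnDeriv hQ'ν]
    simp [measure_univ]
  have hνuniv : (ν Set.univ).toReal = 2 := by
    rw [hν, Measure.add_apply, measure_univ]; norm_num
  have hval : ∫ x, (2 * g x ^ 2 - 2 * g x + 1 / 2) ∂ν
      = 2 * (∫ x, g x ^ 2 ∂ν) - 1 := by
    rw [integral_add hgsq2_int (integrable_const _),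
      integral_sub (hgsq_int.const_mul 2) (hg_int.const_mul 2),
      integral_const_mul, integral_const_mul, integral_const, smul_eq_mul, measureReal_def, hνuniv, hint_g]
    ring
  have hreal : 2 * (∫ x, g x ^ 2 ∂ν) ≤ sqHellinger Q' Q + 1 := by
    rw [hval] at hmono; linarith
  -- put together in ℝ≥0∞
  rw [hJ]
  rw [tsub_le_iff_right]
  have h2 : (2:ℝ≥0∞) * ENNReal.ofReal (∫ x, g x ^ 2 ∂ν)
      = ENNReal.ofReal (2 * ∫ x, g x ^ 2 ∂ν) := by
    rw [ENNReal.ofReal_mul (by norm_num)]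
    norm_num
  rw [h2]
  calc ENNReal.ofReal (2 * ∫ x, g x ^ 2 ∂ν)
      ≤ ENNReal.ofReal (sqHellinger Q' Q + 1) := ENNReal.ofReal_le_ofReal hreal
    _ = ENNReal.ofReal (sqHellinger Q' Q) + 1 := by
        rw [ENNReal.ofReal_add hH0 (by norm_num)]
        norm_num
end AuxModuli

section BindModuli
variable {Θ 𝒳 : Type*} [MeasurableSpace Θ] [MeasurableSpace 𝒳]

lemma bind_prob (P : Θ → Measure 𝒳) (hPm : Measurable P) (hPp : ∀ θ, IsProbabilityMeasure (P θ))
    (π : Measure Θ) [IsProbabilityMeasure π] : IsProbabilityMeasure (π.bind P) := by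
  constructor
  rw [Measure.bind_apply MeasurableSet.univ hPm.aemeasurable]
  rw [show (fun θ => P θ Set.univ) = fun _ => 1 from funext fun θ => (hPp θ).measure_univ]
  simp

lemma bind_mix (P : Θ → Measure 𝒳) (hPm : Measurable P) (π π' : Measure Θ) (a b : ℝ≥0∞) :
    ((a • π + b • π').bind P) = a • (π.bind P) + b • (π'.bind P) := by
  ext s hs
  rw [Measure.bind_apply hs hPm.aemeasurable]
  rw [lintegral_add_measure, lintegral_smul_measure, lintegral_smul_measure]
  simp only [Measure.add_apply, Measure.smul_apply, smul_eq_mul]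
  rw [Measure.bind_apply hs hPm.aemeasurable, Measure.bind_apply hs hPm.aemeasurable]

end BindModuli

section SupHelpers

lemma csSup_le_csSup_trick {A B : Set ℝ} (h0A : 0 ∈ A) (hAB : A ⊆ B) {c : ℝ}
    (hc : 0 < c) (hmap : ∀ x ∈ B, c * x ∈ A) : sSup A ≤ sSup B := by
  by_cases hB : BddAbove B
  · exact csSup_le_csSup hB ⟨0, h0A⟩ hAB
  · have hA : ¬ BddAbove A := by
      rintro ⟨b, hb⟩
      apply hB
      refine ⟨b / c, fun x hx => ?_⟩
      have h1 : c * x ≤ b := hb (hmap x hx)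
      rw [le_div_iff₀ hc]
      linarith
    rw [Real.sSup_of_not_bddAbove hA, Real.sSup_of_not_bddAbove hB]

lemma half_csSup {A B : Set ℝ} (h0B : 0 ∈ B) (hAB : A ⊆ B)
    (hmap : ∀ x ∈ B, x / 2 ∈ A) : sSup B / 2 ≤ sSup A := by
  by_cases hA : BddAbove A
  · have h0A : 0 ∈ A := by simpa using hmap 0 h0B
    have hle : sSup B ≤ 2 * sSup A := by
      refine csSup_le ⟨0, h0B⟩ fun x hx => ?_
      have := le_csSup hA (hmap x hx)
      linarith
    linarith
  · have hB : ¬ BddAbove B := fun h => hA (h.mono hAB)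
    rw [Real.sSup_of_not_bddAbove hA, Real.sSup_of_not_bddAbove hB]
    norm_num

end SupHelpers

/-- Comparison of the moduli of continuity:
`(1/2)δ_{H²}(t) ≤ δ_{χ²}(t) ≤ δ_{H²}(t) ≤ δ_TV(t) ≤ δ_{H²}(√(2t))` for all `t ≥ 0`. -/
theorem moduli_comparison
    {Θ 𝒳 : Type*} [MeasurableSpace Θ] [MeasurableSpace 𝒳]
    (P : Θ → Measure 𝒳) (hPm : Measurable P) (hPp : ∀ θ, IsProbabilityMeasure (P θ))
    (Prior : Set (Measure Θ)) (hprob : ∀ π ∈ Prior, IsProbabilityMeasure π)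
    (hconv : ∀ π ∈ Prior, ∀ π' ∈ Prior, ∀ a b : ℝ≥0, a + b = 1 →
      (a : ℝ≥0∞) • π + (b : ℝ≥0∞) • π' ∈ Prior)
    (T : Measure Θ → ℝ)
    (haff : ∀ π ∈ Prior, ∀ π' ∈ Prior, ∀ a b : ℝ≥0, a + b = 1 →
      T ((a : ℝ≥0∞) • π + (b : ℝ≥0∞) • π') = (a : ℝ) * T π + (b : ℝ) * T π')
    (δχ δH δT : ℝ → ℝ)
    (hδχ : ∀ t : ℝ, δχ t = sSup {x : ℝ | ∃ π ∈ Prior, ∃ π' ∈ Prior,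
      chiSq (π'.bind P) (π.bind P) ≤ ENNReal.ofReal (t ^ 2) ∧ x = T π' - T π})
    (hδH : ∀ t : ℝ, δH t = sSup {x : ℝ | ∃ π ∈ Prior, ∃ π' ∈ Prior,
      sqHellinger (π'.bind P) (π.bind P) ≤ t ^ 2 ∧ x = T π' - T π})
    (hδT : ∀ t : ℝ, δT t = sSup {x : ℝ | ∃ π ∈ Prior, ∃ π' ∈ Prior,
      TVdist (π'.bind P) (π.bind P) ≤ t ∧ x = T π' - T π}) :
    ∀ t : ℝ, 0 ≤ t →
      δH t / 2 ≤ δχ t ∧ δχ t ≤ δH t ∧ δH t ≤ δT t ∧ δT t ≤ δH (Real.sqrt (2 * t)) := by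
  intro t ht
  rw [hδχ t, hδH t, hδT t, hδH (Real.sqrt (2 * t))]
  set Aχ := {x : ℝ | ∃ π ∈ Prior, ∃ π' ∈ Prior,
      chiSq (π'.bind P) (π.bind P) ≤ ENNReal.ofReal (t ^ 2) ∧ x = T π' - T π} with hAχdef
  set AH := {x : ℝ | ∃ π ∈ Prior, ∃ π' ∈ Prior,
      sqHellinger (π'.bind P) (π.bind P) ≤ t ^ 2 ∧ x = T π' - T π} with hAHdef
  set AT := {x : ℝ | ∃ π ∈ Prior, ∃ π' ∈ Prior,
      TVdist (π'.bind P) (π.bind P) ≤ t ∧ x = T π' - T π} with hATdef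
  set AH2 := {x : ℝ | ∃ π ∈ Prior, ∃ π' ∈ Prior,
      sqHellinger (π'.bind P) (π.bind P) ≤ Real.sqrt (2 * t) ^ 2 ∧ x = T π' - T π} with hAH2def
  by_cases hP : Prior.Nonempty
  swap
  · -- Prior is empty : all sets are empty
    have hempty : ∀ (C : Measure Θ → Measure Θ → Prop),
        {x : ℝ | ∃ π ∈ Prior, ∃ π' ∈ Prior, C π π' ∧ x = T π' - T π} = (∅ : Set ℝ) := by
      intro C
      rw [Set.eq_empty_iff_forall_notMem]
      rintro x ⟨π, hπ, -⟩
      exact hP ⟨π, hπ⟩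
    rw [hAχdef, hAHdef, hATdef, hAH2def, hempty, hempty, hempty, hempty, Real.sSup_empty]
    norm_num
  have hhalf : (1/2 : ℝ≥0) + 1/2 = 1 := by
    rw [← NNReal.coe_inj]
    push_cast
    norm_num
  obtain ⟨πb, hπb⟩ := hP
  haveI := hprob πb hπb
  haveI : IsProbabilityMeasure (πb.bind P) := bind_prob P hPm hPp πb
  -- zero belongs to every set
  have h0χ : (0:ℝ) ∈ Aχ :=
    ⟨πb, hπb, πb, hπb, by rw [chiSq_self]; positivity, (sub_self _).symm⟩
  have h0H : (0:ℝ) ∈ AH :=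
    ⟨πb, hπb, πb, hπb, by rw [sqHellinger_self]; positivity, (sub_self _).symm⟩
  have h0T : (0:ℝ) ∈ AT :=
    ⟨πb, hπb, πb, hπb, by rw [TVdist_self]; exact ht, (sub_self _).symm⟩
  -- the half map AH → Aχ via midpoint mixtures
  have mapHχ : ∀ x ∈ AH, x / 2 ∈ Aχ := by
    rintro x ⟨π, hπ, π', hπ', hH, rfl⟩
    haveI := hprob π hπ
    haveI := hprob π' hπ'
    haveI : IsProbabilityMeasure (π.bind P) := bind_prob P hPm hPp π
    haveI : IsProbabilityMeasure (π'.bind P) := bind_prob P hPm hPp π'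
    have hmem : ((1/2 : ℝ≥0) : ℝ≥0∞) • π + ((1/2 : ℝ≥0) : ℝ≥0∞) • π' ∈ Prior :=
      hconv π hπ π' hπ' (1/2) (1/2) hhalf
    refine ⟨_, hmem, π', hπ', ?_, ?_⟩
    · rw [bind_mix P hPm]
      exact (chiSq_mid (π'.bind P) (π.bind P)).trans (ENNReal.ofReal_le_ofReal hH)
    · rw [haff π hπ π' hπ' (1/2) (1/2) hhalf]
      push_cast
      ring
  -- inclusion Aχ ⊆ AH
  have incχH : Aχ ⊆ AH := by
    rintro x ⟨π, hπ, π', hπ', hc, rfl⟩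
    haveI := hprob π hπ
    haveI := hprob π' hπ'
    haveI : IsProbabilityMeasure (π.bind P) := bind_prob P hPm hPp π
    haveI : IsProbabilityMeasure (π'.bind P) := bind_prob P hPm hPp π'
    exact ⟨π, hπ, π', hπ',
      sqH_le_of_chiSq (π'.bind P) (π.bind P) (sq_nonneg t) hc, rfl⟩
  -- inclusion AH ⊆ AT
  have incHT : AH ⊆ AT := by
    rintro x ⟨π, hπ, π', hπ', hH, rfl⟩
    haveI := hprob π hπ
    haveI := hprob π' hπ'
    haveI : IsProbabilityMeasure (π.bind P) := bind_prob P hPm hPp π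
    haveI : IsProbabilityMeasure (π'.bind P) := bind_prob P hPm hPp π'
    refine ⟨π, hπ, π', hπ', ?_, rfl⟩
    calc TVdist (π'.bind P) (π.bind P) ≤ Real.sqrt (sqHellinger (π'.bind P) (π.bind P)) :=
          tv_le_sqrt_sqH _ _
      _ ≤ Real.sqrt (t ^ 2) := Real.sqrt_le_sqrt hH
      _ = t := by rw [Real.sqrt_sq ht]
  -- inclusion AT ⊆ AH2
  have incTH2 : AT ⊆ AH2 := by
    rintro x ⟨π, hπ, π', hπ', hTV, rfl⟩
    haveI := hprob π hπ
    haveI := hprob π' hπ'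
    haveI : IsProbabilityMeasure (π.bind P) := bind_prob P hPm hPp π
    haveI : IsProbabilityMeasure (π'.bind P) := bind_prob P hPm hPp π'
    refine ⟨π, hπ, π', hπ', ?_, rfl⟩
    rw [Real.sq_sqrt (by linarith : (0:ℝ) ≤ 2 * t)]
    calc sqHellinger (π'.bind P) (π.bind P) ≤ 2 * TVdist (π'.bind P) (π.bind P) :=
          sqH_le_two_tv _ _
      _ ≤ 2 * t := by linarith
  -- scaled mixtures
  have scale : ∀ lam : ℝ≥0, lam ≤ 1 → ∀ π ∈ Prior, ∀ π' ∈ Prior,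
      ∃ π'' ∈ Prior,
        π''.bind P = (lam : ℝ≥0∞) • (π'.bind P) + (((1:ℝ≥0) - lam : ℝ≥0) : ℝ≥0∞) • (π.bind P)
        ∧ T π'' - T π = (lam : ℝ) * (T π' - T π) := by
    intro lam hlam π hπ π' hπ'
    have h1 : lam + (1 - lam) = 1 := add_tsub_cancel_of_le hlam
    refine ⟨(lam : ℝ≥0∞) • π' + (((1:ℝ≥0) - lam : ℝ≥0) : ℝ≥0∞) • π,
      hconv π' hπ' π hπ lam (1 - lam) h1, bind_mix P hPm π' π _ _, ?_⟩
    rw [haff π' hπ' π hπ lam (1 - lam) h1, NNReal.coe_sub hlam, NNReal.coe_one]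
    ring
  -- map AT → AH with positive factor
  obtain ⟨c, hcpos, mapTH⟩ : ∃ c : ℝ, 0 < c ∧ ∀ x ∈ AT, c * x ∈ AH := by
    by_cases ht0 : t = 0
    · refine ⟨1, one_pos, fun x hx => ?_⟩
      obtain ⟨π, hπ, π', hπ', hTV, rfl⟩ := hx
      haveI := hprob π hπ
      haveI := hprob π' hπ'
      haveI : IsProbabilityMeasure (π.bind P) := bind_prob P hPm hPp π
      haveI : IsProbabilityMeasure (π'.bind P) := bind_prob P hPm hPp π'
      have hTV0 : TVdist (π'.bind P) (π.bind P) = 0 :=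
        le_antisymm (ht0 ▸ hTV) TVdist_nonneg
      refine ⟨π, hπ, π', hπ', ?_, by rw [one_mul]⟩
      calc sqHellinger (π'.bind P) (π.bind P) ≤ 2 * TVdist (π'.bind P) (π.bind P) :=
            sqH_le_two_tv _ _
        _ = 0 := by rw [hTV0]; ring
        _ ≤ t ^ 2 := sq_nonneg t
    · have htpos : 0 < t := lt_of_le_of_ne ht (Ne.symm ht0)
      set lam : ℝ≥0 := Real.toNNReal (min 1 (t / 2)) with hlamdef
      have hchalf : (0:ℝ) < min 1 (t / 2) := lt_min one_pos (by positivity)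
      have hlamcoe : (lam : ℝ) = min 1 (t / 2) := Real.coe_toNNReal _ hchalf.le
      have hlam1 : lam ≤ 1 := by
        rw [← NNReal.coe_le_coe, hlamcoe, NNReal.coe_one]
        exact min_le_left _ _
      refine ⟨(lam : ℝ), by rw [hlamcoe]; exact hchalf, fun x hx => ?_⟩
      obtain ⟨π, hπ, π', hπ', hTV, rfl⟩ := hx
      haveI := hprob π hπ
      haveI := hprob π' hπ'
      haveI : IsProbabilityMeasure (π.bind P) := bind_prob P hPm hPp π
      haveI : IsProbabilityMeasure (π'.bind P) := bind_prob P hPm hPp π'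
      obtain ⟨π'', hπ'', hbind, hT⟩ := scale lam hlam1 π hπ π' hπ'
      haveI := hprob π'' hπ''
      haveI : IsProbabilityMeasure (π''.bind P) := bind_prob P hPm hPp π''
      refine ⟨π, hπ, π'', hπ'', ?_, by rw [hT]⟩
      have hTV2 : TVdist (π''.bind P) (π.bind P) ≤ (lam : ℝ) * t := by
        rw [hbind]
        calc TVdist ((lam : ℝ≥0∞) • (π'.bind P) + (((1:ℝ≥0) - lam : ℝ≥0) : ℝ≥0∞) • (π.bind P))
              (π.bind P) ≤ (lam : ℝ) * TVdist (π'.bind P) (π.bind P) :=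
              tv_smul (π'.bind P) (π.bind P) lam hlam1
          _ ≤ (lam : ℝ) * t := mul_le_mul_of_nonneg_left hTV lam.coe_nonneg
      calc sqHellinger (π''.bind P) (π.bind P) ≤ 2 * TVdist (π''.bind P) (π.bind P) :=
            sqH_le_two_tv _ _
        _ ≤ 2 * ((lam : ℝ) * t) := by linarith
        _ ≤ t ^ 2 := by
            have h2 : (lam : ℝ) ≤ t / 2 := hlamcoe ▸ min_le_right _ _
            nlinarith
  -- map AH2 → AT with positive factor
  obtain ⟨c', hc'pos, mapH2T⟩ : ∃ c' : ℝ, 0 < c' ∧ ∀ x ∈ AH2, c' * x ∈ AT := by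
    by_cases ht0 : t = 0
    · refine ⟨1, one_pos, fun x hx => ?_⟩
      obtain ⟨π, hπ, π', hπ', hH, rfl⟩ := hx
      haveI := hprob π hπ
      haveI := hprob π' hπ'
      haveI : IsProbabilityMeasure (π.bind P) := bind_prob P hPm hPp π
      haveI : IsProbabilityMeasure (π'.bind P) := bind_prob P hPm hPp π'
      have h20 : Real.sqrt (2 * t) ^ 2 = 0 := by rw [ht0]; norm_num
      have hH0 : sqHellinger (π'.bind P) (π.bind P) = 0 :=
        le_antisymm (by rw [← h20]; exact hH) (sqHellinger_nonneg _ _)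
      refine ⟨π, hπ, π', hπ', ?_, by rw [one_mul]⟩
      calc TVdist (π'.bind P) (π.bind P) ≤ Real.sqrt (sqHellinger (π'.bind P) (π.bind P)) :=
            tv_le_sqrt_sqH _ _
        _ = 0 := by rw [hH0, Real.sqrt_zero]
        _ ≤ t := ht
    · have htpos : 0 < t := lt_of_le_of_ne ht (Ne.symm ht0)
      have hs0pos : 0 < Real.sqrt (2 * t) := Real.sqrt_pos.mpr (by linarith)
      set lam : ℝ≥0 := Real.toNNReal (min 1 (t / Real.sqrt (2 * t))) with hlamdef
      have hchalf : (0:ℝ) < min 1 (t / Real.sqrt (2 * t)) := lt_min one_pos (by positivity)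
      have hlamcoe : (lam : ℝ) = min 1 (t / Real.sqrt (2 * t)) := Real.coe_toNNReal _ hchalf.le
      have hlam1 : lam ≤ 1 := by
        rw [← NNReal.coe_le_coe, hlamcoe, NNReal.coe_one]
        exact min_le_left _ _
      refine ⟨(lam : ℝ), by rw [hlamcoe]; exact hchalf, fun x hx => ?_⟩
      obtain ⟨π, hπ, π', hπ', hH, rfl⟩ := hx
      haveI := hprob π hπ
      haveI := hprob π' hπ'
      haveI : IsProbabilityMeasure (π.bind P) := bind_prob P hPm hPp π
      haveI : IsProbabilityMeasure (π'.bind P) := bind_prob P hPm hPp π'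
      obtain ⟨π'', hπ'', hbind, hT⟩ := scale lam hlam1 π hπ π' hπ'
      haveI := hprob π'' hπ''
      haveI : IsProbabilityMeasure (π''.bind P) := bind_prob P hPm hPp π''
      refine ⟨π, hπ, π'', hπ'', ?_, by rw [hT]⟩
      have hTV1 : TVdist (π'.bind P) (π.bind P) ≤ Real.sqrt (2 * t) := by
        calc TVdist (π'.bind P) (π.bind P) ≤ Real.sqrt (sqHellinger (π'.bind P) (π.bind P)) :=
              tv_le_sqrt_sqH _ _
          _ ≤ Real.sqrt (Real.sqrt (2 * t) ^ 2) := Real.sqrt_le_sqrt hH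
          _ = Real.sqrt (2 * t) := Real.sqrt_sq hs0pos.le
      have hTV2 : TVdist (π''.bind P) (π.bind P) ≤ (lam : ℝ) * Real.sqrt (2 * t) := by
        rw [hbind]
        calc TVdist ((lam : ℝ≥0∞) • (π'.bind P) + (((1:ℝ≥0) - lam : ℝ≥0) : ℝ≥0∞) • (π.bind P))
              (π.bind P) ≤ (lam : ℝ) * TVdist (π'.bind P) (π.bind P) :=
              tv_smul (π'.bind P) (π.bind P) lam hlam1
          _ ≤ (lam : ℝ) * Real.sqrt (2 * t) := mul_le_mul_of_nonneg_left hTV1 lam.coe_nonneg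
      have hfin : (lam : ℝ) * Real.sqrt (2 * t) ≤ t := by
        have h2 : (lam : ℝ) ≤ t / Real.sqrt (2 * t) := hlamcoe ▸ min_le_right _ _
        calc (lam : ℝ) * Real.sqrt (2 * t) ≤ (t / Real.sqrt (2 * t)) * Real.sqrt (2 * t) :=
              mul_le_mul_of_nonneg_right h2 hs0pos.le
          _ = t := div_mul_cancel₀ t hs0pos.ne'
      exact hTV2.trans hfin
  refine ⟨half_csSup h0H incχH mapHχ, ?_, ?_, ?_⟩
  · refine csSup_le_csSup_trick h0χ incχH (c := (1:ℝ)/2) (by norm_num) fun x hx => ?_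
    rw [show (1:ℝ)/2 * x = x / 2 by ring]
    exact mapHχ x hx
  · exact csSup_le_csSup_trick h0H incHT hcpos mapTH
  · exact csSup_le_csSup_trick h0T incTH2 hc'pos mapH2T
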